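/- Suppose the trajectory (A(t), B(t)) follows the gradient flow of the loss L(ABᵀ) + (λ/2)(‖A‖_F² + ‖B‖_F²) with λ > 0, L differentiable, and suppose ‖A(t)‖_F, ‖B(t)‖_F remain bounded by M for all t. Then |(L(A Bᵀ) + (λ/2)(‖A‖_F² + ‖B‖_F²)) − (L(ABᵀ) + λ‖ABᵀ‖_*)| → 0 exponentially as t → ∞. -/

import Mathlib

open Matrix

/-- Squared Frobenius norm of a real matrix. -/
noncomputable def frobSq {m n : ℕ} (A : Matrix (Fin m) (Fin n) ℝ) : ℝ :=
  ∑ i, ∑ j, (A i j) ^ 2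

/-- Frobenius norm. -/
noncomputable def frobNorm {m n : ℕ} (A : Matrix (Fin m) (Fin n) ℝ) : ℝ :=
  Real.sqrt (frobSq A)

lemma wwT_posSemidef {m n : ℕ} (W : Matrix (Fin m) (Fin n) ℝ) :
    (W * Wᵀ).PosSemidef := by
  simpa [Matrix.conjTranspose_eq_transpose_of_trivial] using
    W.posSemidef_self_mul_conjTranspose

/-- The positive semidefinite square root of a positive semidefinite matrix
(the definition `Matrix.PosSemidef.sqrt` of the older Mathlib, since removed). -/
noncomputable def Matrix.PosSemidef.sqrt {n 𝕜 : Type*} [Fintype n] [DecidableEq n] [RCLike 𝕜] [PartialOrder 𝕜]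
    {A : Matrix n n 𝕜} (hA : A.PosSemidef) : Matrix n n 𝕜 :=
  hA.1.eigenvectorUnitary.1 * diagonal ((↑) ∘ (√·) ∘ hA.1.eigenvalues) *
    (star hA.1.eigenvectorUnitary : Matrix n n 𝕜)

/-- Nuclear norm: trace of the PSD square root of `W * Wᵀ`. -/
noncomputable def nuclearNorm {m n : ℕ} (W : Matrix (Fin m) (Fin n) ℝ) : ℝ :=
  (wwT_posSemidef W).sqrt.trace


/-!
The imbalance `AᵀA - BᵀB` obeys `τ D' = -2λ D` along the flow (the gradient terms cancel), so it
decays like `exp (-2λt/τ)`. The gap between the two losses is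
`λ ((‖A‖_F² - ‖ABᵀ‖_*) - tr (AᵀA - BᵀB) / 2)`. Here `‖A‖_F² = tr (AAᵀ)` and
`‖ABᵀ‖_* = tr √(ABᵀBAᵀ)`, and the squares of these two positive semidefinite matrices differ by
`A (AᵀA - BᵀB) Aᵀ`. For positive semidefinite `S`, `T` every eigenvalue `μ` of `S - T` satisfies
`μ² ≤ ‖S² - T²‖_F`, so `|tr S - tr T| ≤ k √‖S² - T²‖_F`, and the first term of the gap is
`O(M exp (-λt/τ))`.
-/

namespace Matrix.PosSemidef

open scoped MatrixOrder

variable {n : Type*} [Fintype n] [DecidableEq n] {X : Matrix n n ℝ}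

lemma sqrt_eq_cfcSqrt (hX : X.PosSemidef) : hX.sqrt = CFC.sqrt X := by
  rw [CFC.sqrt_eq_cfc, cfc_nnreal_eq_real _ X, hX.1.cfc_eq]
  simp only [IsHermitian.cfc, Unitary.conjStarAlgAut_apply, Matrix.PosSemidef.sqrt]
  congr 3
  funext i
  simp [hX.eigenvalues_nonneg i]

lemma posSemidef_sqrt (hX : X.PosSemidef) : hX.sqrt.PosSemidef := by
  rw [hX.sqrt_eq_cfcSqrt]
  exact (CFC.sqrt_nonneg X).posSemidef

lemma sqrt_mul_self (hX : X.PosSemidef) : hX.sqrt * hX.sqrt = X := by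
  rw [hX.sqrt_eq_cfcSqrt]
  exact CFC.sqrt_mul_sqrt_self X hX.nonneg

end Matrix.PosSemidef

section Frobenius

open scoped Matrix.Norms.Frobenius

variable {n : Type*} [Fintype n]

lemma abs_dotProduct_mulVec_self_le (Z : Matrix n n ℝ) (w : EuclideanSpace ℝ n) :
    |w ⬝ᵥ (Z *ᵥ w)| ≤ ‖Z‖ * ‖w‖ ^ 2 := by
  have hZw : ‖WithLp.toLp 2 (Z *ᵥ w)‖ ≤ ‖Z‖ * ‖w‖ := by
    rw [← frobenius_norm_replicateCol (ι := Unit), replicateCol_mulVec,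
      ← frobenius_norm_replicateCol (ι := Unit)]
    exact frobenius_norm_mul _ _
  have hinner : w ⬝ᵥ (Z *ᵥ w) = inner ℝ w (WithLp.toLp 2 (Z *ᵥ w)) := by
    rw [EuclideanSpace.inner_eq_star_dotProduct, star_trivial, dotProduct_comm]
  calc |w ⬝ᵥ (Z *ᵥ w)| ≤ ‖w‖ * ‖WithLp.toLp 2 (Z *ᵥ w)‖ := hinner ▸ abs_real_inner_le_norm _ _
    _ ≤ ‖Z‖ * ‖w‖ ^ 2 := by nlinarith [norm_nonneg w]

lemma sq_eigenvalue_sub_le_of_posSemidef [DecidableEq n] {S T : Matrix n n ℝ}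
    (hS : S.PosSemidef) (hT : T.PosSemidef) (hR : (S - T).IsHermitian) (i : n) :
    hR.eigenvalues i ^ 2 ≤ ‖S * S - T * T‖ := by
  set w := hR.eigenvectorBasis i
  set μ := hR.eigenvalues i
  have hw : ‖w‖ = 1 := hR.eigenvectorBasis.orthonormal.1 i
  have hμ : μ = w ⬝ᵥ (S *ᵥ w) - w ⬝ᵥ (T *ᵥ w) := by
    rw [← dotProduct_sub, ← sub_mulVec]
    simpa using hR.eigenvalues_eq i
  have hSw : 0 ≤ w ⬝ᵥ (S *ᵥ w) := by simpa using hS.dotProduct_mulVec_nonneg w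
  have hTw : 0 ≤ w ⬝ᵥ (T *ᵥ w) := by simpa using hT.dotProduct_mulVec_nonneg w
  -- `S * S - T * T` and `(S + T) * (S - T)` differ by the antisymmetric `S * T - T * S`
  have hquad : w ⬝ᵥ ((S * S - T * T) *ᵥ w) = μ * (w ⬝ᵥ (S *ᵥ w) + w ⬝ᵥ (T *ᵥ w)) := by
    have hsplit : S * S - T * T = (S + T) * (S - T) + (S * T - (S * T)ᵀ) := by
      rw [transpose_mul, (isHermitian_iff_isSymm.mp hS.1).eq, (isHermitian_iff_isSymm.mp hT.1).eq]
      noncomm_ring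
    rw [hsplit, add_mulVec, dotProduct_add, sub_mulVec (S * T), dotProduct_sub,
      dotProduct_transpose_mulVec, sub_self, add_zero, ← mulVec_mulVec,
      hR.mulVec_eigenvectorBasis i, mulVec_smul, dotProduct_smul, add_mulVec, dotProduct_add,
      smul_eq_mul]
  have hbound := abs_dotProduct_mulVec_self_le (S * S - T * T) w
  rw [hquad, hw, one_pow, mul_one, abs_mul, abs_of_nonneg (add_nonneg hSw hTw)] at hbound
  calc μ ^ 2 ≤ |μ| * (w ⬝ᵥ (S *ᵥ w) + w ⬝ᵥ (T *ᵥ w)) := by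
        rw [← sq_abs, sq]
        gcongr
        rw [hμ, abs_le]
        constructor <;> linarith
    _ ≤ ‖S * S - T * T‖ := hbound

lemma abs_trace_sub_le_of_posSemidef [DecidableEq n] {S T : Matrix n n ℝ}
    (hS : S.PosSemidef) (hT : T.PosSemidef) :
    |S.trace - T.trace| ≤ Fintype.card n * √‖S * S - T * T‖ := by
  have hR : (S - T).IsHermitian := hS.1.sub hT.1
  have htrace : S.trace - T.trace = ∑ i, hR.eigenvalues i := by
    simpa [trace_sub] using hR.trace_eq_sum_eigenvalues
  calc |S.trace - T.trace| ≤ ∑ i, |hR.eigenvalues i| := htrace ▸ Finset.abs_sum_le_sum_abs _ _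
    _ ≤ ∑ _i : n, √‖S * S - T * T‖ := Finset.sum_le_sum fun i _ =>
        Real.abs_le_sqrt (sq_eigenvalue_sub_le_of_posSemidef hS hT hR i)
    _ = Fintype.card n * √‖S * S - T * T‖ := by simp

lemma frobNorm_eq_norm {m n : ℕ} (A : Matrix (Fin m) (Fin n) ℝ) : frobNorm A = ‖A‖ := by
  rw [frobNorm, frobSq, frobenius_norm_def, Real.sqrt_eq_rpow]
  simp

lemma frobNorm_smul {m n : ℕ} (c : ℝ) (A : Matrix (Fin m) (Fin n) ℝ) :
    frobNorm (c • A) = |c| * frobNorm A := by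
  rw [frobNorm_eq_norm, frobNorm_eq_norm, norm_smul, Real.norm_eq_abs]

end Frobenius

lemma eq_exp_mul_of_hasDerivAt_eq_mul {c : ℝ} {f : ℝ → ℝ} (hf : ∀ t, HasDerivAt f (c * f t) t)
    (t : ℝ) : f t = Real.exp (c * t) * f 0 := by
  have hderiv : ∀ s, HasDerivAt (fun u => Real.exp (-c * u) * f u) 0 s := fun s =>
    ((((hasDerivAt_id' s).const_mul (-c)).exp).fun_mul (hf s)).congr_deriv (by ring)
  have hconst := is_const_of_deriv_eq_zero (fun s => (hderiv s).differentiableAt)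
    (fun s => (hderiv s).deriv) t 0
  rw [mul_zero, Real.exp_zero, one_mul] at hconst
  rw [← hconst, ← mul_assoc, ← Real.exp_add, neg_mul, add_neg_cancel, Real.exp_zero, one_mul]

section GradientFlow

variable {m n r : Type*} [Fintype m] [Fintype n]

def imbalance (A : Matrix m r ℝ) (B : Matrix n r ℝ) : Matrix r r ℝ := Aᵀ * A - Bᵀ * B

lemma smul_imbalance_deriv_eq {τ lam : ℝ} {G : Matrix m n ℝ} {A A' : Matrix m r ℝ}
    {B B' : Matrix n r ℝ} (hA : τ • A' = -(G * B) - lam • A) (hB : τ • B' = -(Gᵀ * A) - lam • B) :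
    τ • (A'ᵀ * A + Aᵀ * A' - (B'ᵀ * B + Bᵀ * B')) = -(2 * lam) • imbalance A B := by
  have hexpand : τ • (A'ᵀ * A + Aᵀ * A' - (B'ᵀ * B + Bᵀ * B')) =
      (τ • A')ᵀ * A + Aᵀ * (τ • A') - ((τ • B')ᵀ * B + Bᵀ * (τ • B')) := by
    simp only [transpose_smul, Matrix.smul_mul, Matrix.mul_smul, smul_sub, smul_add]
  rw [hexpand, hA, hB, imbalance]
  simp only [transpose_sub, transpose_neg, transpose_mul, transpose_smul, transpose_transpose,
    Matrix.sub_mul, Matrix.mul_sub, Matrix.neg_mul, Matrix.mul_neg, Matrix.smul_mul,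
    Matrix.mul_smul, Matrix.mul_assoc]
  module

lemma hasDerivAt_imbalance_apply {A A' : ℝ → Matrix m r ℝ} {B B' : ℝ → Matrix n r ℝ} {t : ℝ}
    (hA : ∀ i j, HasDerivAt (fun s => A s i j) (A' t i j) t)
    (hB : ∀ i j, HasDerivAt (fun s => B s i j) (B' t i j) t) (k l : r) :
    HasDerivAt (fun s => imbalance (A s) (B s) k l)
      (((A' t)ᵀ * A t + (A t)ᵀ * A' t - ((B' t)ᵀ * B t + (B t)ᵀ * B' t)) k l) t := by
  simp only [imbalance, Matrix.sub_apply, Matrix.add_apply, mul_apply, transpose_apply,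
    ← Finset.sum_add_distrib]
  exact (HasDerivAt.fun_sum fun i _ => (hA i k).mul (hA i l)).sub
    (HasDerivAt.fun_sum fun j _ => (hB j k).mul (hB j l))

theorem imbalance_eq_exp_smul {τ lam : ℝ} (hτ : τ ≠ 0) {G : ℝ → Matrix m n ℝ}
    {A A' : ℝ → Matrix m r ℝ} {B B' : ℝ → Matrix n r ℝ}
    (hderivA : ∀ t i j, HasDerivAt (fun s => A s i j) (A' t i j) t)
    (hderivB : ∀ t i j, HasDerivAt (fun s => B s i j) (B' t i j) t)
    (hflowA : ∀ t, τ • A' t = -(G t * B t) - lam • A t)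
    (hflowB : ∀ t, τ • B' t = -((G t)ᵀ * A t) - lam • B t) (t : ℝ) :
    imbalance (A t) (B t) = Real.exp (-(2 * lam / τ) * t) • imbalance (A 0) (B 0) := by
  ext k l
  rw [Matrix.smul_apply, smul_eq_mul]
  refine eq_exp_mul_of_hasDerivAt_eq_mul (f := fun s => imbalance (A s) (B s) k l)
    (fun s => ?_) t
  convert hasDerivAt_imbalance_apply (hderivA s) (hderivB s) k l using 1
  have h := congrFun (congrFun (smul_imbalance_deriv_eq (hflowA s) (hflowB s)) k) l
  simp only [Matrix.smul_apply, smul_eq_mul] at h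
  field_simp
  linarith

end GradientFlow

section NuclearNorm

open scoped Matrix.Norms.Frobenius

variable {m n r : ℕ}

lemma trace_mul_transpose_self (A : Matrix (Fin m) (Fin n) ℝ) : (A * Aᵀ).trace = frobSq A := by
  simp only [trace, diag_apply, mul_apply, transpose_apply, frobSq, sq]

lemma trace_transpose_mul_self (A : Matrix (Fin m) (Fin n) ℝ) : (Aᵀ * A).trace = frobSq A := by
  simp only [trace, diag_apply, mul_apply, transpose_apply, frobSq, sq]
  exact Finset.sum_comm

lemma abs_frobSq_sub_nuclearNorm_le (A : Matrix (Fin m) (Fin r) ℝ) (B : Matrix (Fin n) (Fin r) ℝ) :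
    |frobSq A - nuclearNorm (A * Bᵀ)| ≤ m * (frobNorm A * √(frobNorm (imbalance A B))) := by
  have hW := wwT_posSemidef (A * Bᵀ)
  have htrace := abs_trace_sub_le_of_posSemidef (wwT_posSemidef A) hW.posSemidef_sqrt
  rw [hW.sqrt_mul_self, trace_mul_transpose_self, Fintype.card_fin] at htrace
  have hdiff : A * Aᵀ * (A * Aᵀ) - A * Bᵀ * (A * Bᵀ)ᵀ = A * imbalance A B * Aᵀ := by
    simp only [imbalance, transpose_mul, transpose_transpose, Matrix.mul_sub, Matrix.sub_mul,
      Matrix.mul_assoc]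
  have hnorm : ‖A * imbalance A B * Aᵀ‖ ≤ ‖A‖ ^ 2 * ‖imbalance A B‖ :=
    calc _ ≤ ‖A‖ * ‖imbalance A B‖ * ‖Aᵀ‖ := (frobenius_norm_mul _ _).trans
          (mul_le_mul_of_nonneg_right (frobenius_norm_mul _ _) (norm_nonneg _))
      _ = _ := by rw [frobenius_norm_transpose]; ring
  calc |frobSq A - nuclearNorm (A * Bᵀ)| ≤ m * √‖A * imbalance A B * Aᵀ‖ := hdiff ▸ htrace
    _ ≤ m * (frobNorm A * √(frobNorm (imbalance A B))) := by
        rw [frobNorm_eq_norm, frobNorm_eq_norm, ← Real.sqrt_sq (norm_nonneg A),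
          ← Real.sqrt_mul (sq_nonneg _)]
        gcongr

lemma abs_half_frobSq_add_sub_nuclearNorm_le {M : ℝ} (A : Matrix (Fin m) (Fin r) ℝ)
    (B : Matrix (Fin n) (Fin r) ℝ) (hA : frobNorm A ≤ M) :
    |(frobSq A + frobSq B) / 2 - nuclearNorm (A * Bᵀ)| ≤
      m * (M * √(frobNorm (imbalance A B))) + |(imbalance A B).trace| / 2 := by
  have hsplit : (frobSq A + frobSq B) / 2 - nuclearNorm (A * Bᵀ) =
      (frobSq A - nuclearNorm (A * Bᵀ)) - (imbalance A B).trace / 2 := by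
    rw [imbalance, trace_sub, trace_transpose_mul_self, trace_transpose_mul_self]
    ring
  rw [hsplit]
  refine (abs_sub _ _).trans ?_
  rw [abs_div, abs_two]
  gcongr
  exact (abs_frobSq_sub_nuclearNorm_le A B).trans (by gcongr)

end NuclearNorm

theorem losses_coincide_exponentially_general {m n r : ℕ} (τ lam M : ℝ)
    (hτ : 0 < τ) (hlam : 0 < lam)
    (L : Matrix (Fin m) (Fin n) ℝ → ℝ)
    (𝒢 : Matrix (Fin m) (Fin n) ℝ → Matrix (Fin m) (Fin n) ℝ)
    (A A' : ℝ → Matrix (Fin m) (Fin r) ℝ)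
    (B B' : ℝ → Matrix (Fin n) (Fin r) ℝ)
    (hderivA : ∀ t i j, HasDerivAt (fun s => A s i j) (A' t i j) t)
    (hderivB : ∀ t i j, HasDerivAt (fun s => B s i j) (B' t i j) t)
    (hflowA : ∀ t, τ • A' t = -(𝒢 (A t * (B t)ᵀ) * B t) - lam • A t)
    (hflowB : ∀ t, τ • B' t = -((𝒢 (A t * (B t)ᵀ))ᵀ * A t) - lam • B t)
    (hbound : ∀ t, frobNorm (A t) ≤ M ∧ frobNorm (B t) ≤ M) :
    ∃ C c : ℝ, 0 < C ∧ 0 < c ∧ ∀ t, 0 ≤ t →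
      |(L (A t * (B t)ᵀ) + lam / 2 * (frobSq (A t) + frobSq (B t))) -
        (L (A t * (B t)ᵀ) + lam * nuclearNorm (A t * (B t)ᵀ))| ≤
      C * Real.exp (-(c * t)) := by
  set D₀ := imbalance (A 0) (B 0)
  have hM : 0 ≤ M := (Real.sqrt_nonneg _).trans (hbound 0).1
  refine ⟨lam * (m * (M * √(frobNorm D₀)) + |D₀.trace| / 2) + 1, lam / τ, by positivity,
    by positivity, fun t ht => ?_⟩
  set e := Real.exp (-(lam / τ * t))
  have he : 0 < e := Real.exp_pos _
  have he_le : e ≤ 1 := Real.exp_le_one_iff.mpr (by nlinarith [div_pos hlam hτ])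
  have hD : imbalance (A t) (B t) = e ^ 2 • D₀ := by
    rw [imbalance_eq_exp_smul hτ.ne' hderivA hderivB hflowA hflowB t, ← Real.exp_nat_mul]
    congr 2
    ring
  have hgap := abs_half_frobSq_add_sub_nuclearNorm_le (A t) (B t) (hbound t).1
  rw [hD, frobNorm_smul, trace_smul, smul_eq_mul, abs_mul, abs_of_nonneg (sq_nonneg e),
    Real.sqrt_mul (sq_nonneg e), Real.sqrt_sq he.le] at hgap
  calc _ = |lam * ((frobSq (A t) + frobSq (B t)) / 2 - nuclearNorm (A t * (B t)ᵀ))| := by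
        congr 1
        ring
    _ = lam * |(frobSq (A t) + frobSq (B t)) / 2 - nuclearNorm (A t * (B t)ᵀ)| := by
        rw [abs_mul, abs_of_pos hlam]
    _ ≤ lam * (m * (M * (e * √(frobNorm D₀))) + e ^ 2 * |D₀.trace| / 2) := by gcongr
    _ ≤ (lam * (m * (M * √(frobNorm D₀)) + |D₀.trace| / 2) + 1) * e := by
        have he_sq : e ^ 2 ≤ e := by nlinarith
        nlinarith [mul_le_mul_of_nonneg_left he_sq (by positivity : 0 ≤ lam * |D₀.trace| / 2)]

/-- along the gradient flow of the regularized loss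
`L(ABᵀ) + (λ/2)(‖A‖_F² + ‖B‖_F²)` (λ, τ > 0, L differentiable with gradient `𝒢`),
if `‖A(t)‖_F, ‖B(t)‖_F` stay bounded by `M`, then the gap between the
`L2`-regularized loss and the nuclear-norm-regularized loss tends to 0
exponentially as `t → ∞`. -/
theorem losses_coincide_exponentially {m n r : ℕ} (τ lam M : ℝ)
    (hτ : 0 < τ) (hlam : 0 < lam)
    (L : Matrix (Fin m) (Fin n) ℝ → ℝ)
    (𝒢 : Matrix (Fin m) (Fin n) ℝ → Matrix (Fin m) (Fin n) ℝ)
    (hgrad : ∀ W H, HasDerivAt (fun s : ℝ => L (W + s • H)) (∑ i, ∑ j, 𝒢 W i j * H i j) 0)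
    (A A' : ℝ → Matrix (Fin m) (Fin r) ℝ)
    (B B' : ℝ → Matrix (Fin n) (Fin r) ℝ)
    (hderivA : ∀ t i j, HasDerivAt (fun s => A s i j) (A' t i j) t)
    (hderivB : ∀ t i j, HasDerivAt (fun s => B s i j) (B' t i j) t)
    (hflowA : ∀ t, τ • A' t = -(𝒢 (A t * (B t)ᵀ) * B t) - lam • A t)
    (hflowB : ∀ t, τ • B' t = -((𝒢 (A t * (B t)ᵀ))ᵀ * A t) - lam • B t)
    (hbound : ∀ t, frobNorm (A t) ≤ M ∧ frobNorm (B t) ≤ M) :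
    ∃ C c : ℝ, 0 < C ∧ 0 < c ∧ ∀ t, 0 ≤ t →
      |(L (A t * (B t)ᵀ) + lam / 2 * (frobSq (A t) + frobSq (B t))) -
        (L (A t * (B t)ᵀ) + lam * nuclearNorm (A t * (B t)ᵀ))| ≤
      C * Real.exp (-(c * t)) :=
  losses_coincide_exponentially_general τ lam M hτ hlam L 𝒢 A A' B B' hderivA hderivB hflowA hflowB
    hbound
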